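/- arXiv:1802.07171 — 2 statements merged into one kernel-verified Lean document; each statement's English description precedes it below -/
import Mathlib

section
/- Let D ⊆ ℝⁿ be a domain with c_α(Dᶜ) > 0 and let μ ∈ M(D) be a signed Radon measure on D with compact support in D. Then μ has finite α-Green energy g^α_D(μ,μ) < ∞ if and only if its extension by zero belongs to E_α(ℝⁿ), i.e., has finite α-Riesz energy. -/
open MeasureTheory
open scoped ENNReal

/-- Euclidean space `ℝⁿ`. -/
abbrev Rn (n : ℕ) := EuclideanSpace ℝ (Fin n)

/-- The α-Riesz kernel `κ_α(x,y) = |x − y|^{α−n}` on `ℝⁿ` (with values in `[0,∞]`). -/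
noncomputable def rieszK (n : ℕ) (α : ℝ) (x y : Rn n) : ℝ≥0∞ :=
  (‖x - y‖₊ : ℝ≥0∞) ^ (α - n)

/-- The potential of a positive measure relative to a kernel `κ`. -/
noncomputable def pot {X : Type*} [MeasurableSpace X] (κ : X → X → ℝ≥0∞)
    (μ : Measure X) (x : X) : ℝ≥0∞ :=
  ∫⁻ y, κ x y ∂μ

/-- The mutual energy of two positive measures relative to a kernel `κ`. -/
noncomputable def en {X : Type*} [MeasurableSpace X] (κ : X → X → ℝ≥0∞)
    (μ ν : Measure X) : ℝ≥0∞ :=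
  ∫⁻ x, ∫⁻ y, κ x y ∂ν ∂μ

/-- The mutual energy as a real number. -/
noncomputable def enR {X : Type*} [MeasurableSpace X] (κ : X → X → ℝ≥0∞)
    (μ ν : Measure X) : ℝ :=
  (en κ μ ν).toReal

/-- The mutual energy of two signed measures, given through their Jordan decompositions
`(ap, an)` and `(bp, bn)`. -/
noncomputable def enS {X : Type*} [MeasurableSpace X] (κ : X → X → ℝ≥0∞)
    (ap an bp bn : Measure X) : ℝ :=
  enR κ ap bp + enR κ an bn - enR κ ap bn - enR κ an bp

/-- The inner capacity of a set `Q` relative to the kernel `κ`. -/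
noncomputable def cap {X : Type*} [MeasurableSpace X] (κ : X → X → ℝ≥0∞)
    (Q : Set X) : ℝ≥0∞ :=
  (⨅ (μ : Measure X) (_ : μ Qᶜ = 0) (_ : μ Set.univ = 1) (_ : en κ μ μ ≠ ⊤),
    en κ μ μ)⁻¹

/-- The α-Green kernel of `D`, defined from the family `b` of α-Riesz balayages of Dirac
measures onto `Dᶜ`: `g(x,y) = κ_α(x,y) − κ_α(x, ε_y^{Dᶜ})`. -/
noncomputable def greenK (n : ℕ) (α : ℝ) (b : Rn n → Measure (Rn n)) (x y : Rn n) :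
    ℝ≥0∞ :=
  rieszK n α x y - pot (rieszK n α) (b y) x

/-!
The Green kernel is `g(x, y) = κ_α(x, y) − κ_α(x, b y)`, so everything rests on a uniform bound
`κ_α(x, b y) ≤ M` for `x, y ∈ K`. Since `c_α(Dᶜ) > 0` there is a point `z₀ ∉ D`. The measure
`b y` lives on `Dᶜ`, which keeps a distance `δ > 0` from `K`; there `|z₀ − z| ≤ C |x − z|`,
hence, with `C' = C^{n−α}`, `κ_α(x, b y) ≤ C' κ_α(z₀, b y) ≤ C' κ_α(z₀, y) ≤ C' δ^{α−n}`.
Thus `g ≤ κ_α ≤ g + M` on `K × K`. Finite Green energy forces finite mass, because `g ≥ 1` near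
the diagonal of `K × K`; and for finite measures carried by `K` the two energies differ by at
most `M μ(K) ν(K)`.
-/

open Metric Set

section Kernel

variable {X : Type*} [MeasurableSpace X]

lemma cap_empty (κ : X → X → ℝ≥0∞) : cap κ ∅ = 0 := by
  simp [cap]

lemma en_mono_kernel {κ κ' : X → X → ℝ≥0∞} (h : ∀ x y, κ x y ≤ κ' x y) (μ ν : Measure X) :
    en κ μ ν ≤ en κ' μ ν :=
  lintegral_mono fun x => lintegral_mono fun y => h x y

lemma pot_le_mul_pot {κ : X → X → ℝ≥0∞} {β : Measure X} {G : Set X} (hβ : β G = 0)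
    {x x₀ : X} {C : ℝ≥0∞} (hC : C ≠ ⊤) (h : ∀ z ∉ G, κ x z ≤ C * κ x₀ z) :
    pot κ β x ≤ C * pot κ β x₀ :=
  calc pot κ β x ≤ ∫⁻ z, C * κ x₀ z ∂β :=
        lintegral_mono_ae ((measure_eq_zero_iff_ae_notMem.mp hβ).mono h)
    _ = C * pot κ β x₀ := lintegral_const_mul' C _ hC

lemma mul_self_measure_le_en {κ : X → X → ℝ≥0∞} (μ : Measure X) {S : Set X}
    (hS : MeasurableSet S) (h : ∀ x ∈ S, ∀ y ∈ S, 1 ≤ κ x y) :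
    μ S * μ S ≤ en κ μ μ :=
  calc μ S * μ S = ∫⁻ _ in S, μ S ∂μ := by rw [setLIntegral_const, mul_comm]
    _ ≤ ∫⁻ x in S, ∫⁻ y in S, κ x y ∂μ ∂μ := by
        refine setLIntegral_mono' hS fun x hx => ?_
        calc μ S = ∫⁻ _ in S, 1 ∂μ := setLIntegral_one S |>.symm
          _ ≤ ∫⁻ y in S, κ x y ∂μ := setLIntegral_mono' hS fun y hy => h x hx y hy
    _ ≤ ∫⁻ x in S, ∫⁻ y, κ x y ∂μ ∂μ :=
        setLIntegral_mono' hS fun x _ => setLIntegral_le_lintegral _ _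
    _ ≤ en κ μ μ := setLIntegral_le_lintegral _ _

lemma en_le_en_add {κ κ' : X → X → ℝ≥0∞} {K : Set X} {M : ℝ≥0∞}
    (h : ∀ x ∈ K, ∀ y ∈ K, κ x y ≤ κ' x y + M) {μ ν : Measure X} (hμ : μ Kᶜ = 0)
    (hν : ν Kᶜ = 0) :
    en κ μ ν ≤ en κ' μ ν + M * ν univ * μ univ := by
  have hinner : ∀ x ∈ K, ∫⁻ y, κ x y ∂ν ≤ ∫⁻ y, κ' x y ∂ν + M * ν univ := fun x hx =>
    calc ∫⁻ y, κ x y ∂ν ≤ ∫⁻ y, (κ' x y + M) ∂ν :=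
          lintegral_mono_ae ((measure_eq_zero_iff_ae_notMem.mp hν).mono fun y hy =>
            h x hx y (not_notMem.mp hy))
      _ = ∫⁻ y, κ' x y ∂ν + M * ν univ := by
          rw [lintegral_add_right _ measurable_const, lintegral_const]
  calc en κ μ ν ≤ ∫⁻ x, (∫⁻ y, κ' x y ∂ν + M * ν univ) ∂μ :=
        lintegral_mono_ae ((measure_eq_zero_iff_ae_notMem.mp hμ).mono fun x hx =>
          hinner x (not_notMem.mp hx))
    _ = en κ' μ ν + M * ν univ * μ univ := by
        rw [lintegral_add_right _ measurable_const, lintegral_const, en]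

end Kernel

lemma isFiniteMeasure_of_en_ne_top {X : Type*} [MetricSpace X] [MeasurableSpace X]
    [OpensMeasurableSpace X] {κ : X → X → ℝ≥0∞} {K : Set X} (hK : IsCompact K) {r : ℝ}
    (hr : 0 < r) (hκ : ∀ x ∈ K, ∀ y ∈ K, dist x y < r → 1 ≤ κ x y) {μ : Measure X}
    (hμ : μ Kᶜ = 0) (hE : en κ μ μ ≠ ⊤) : IsFiniteMeasure μ := by
  have hball : ∀ c, μ (K ∩ ball c (r / 2)) < ⊤ := fun c => by
    refine ENNReal.mul_self_lt_top_iff.mp ((mul_self_measure_le_en μ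
      (hK.measurableSet.inter measurableSet_ball) fun x hx y hy => ?_).trans_lt hE.lt_top)
    refine hκ x hx.1 y hy.1 ?_
    linarith [dist_triangle_right x y c, mem_ball.mp hx.2, mem_ball.mp hy.2]
  have hμK : μ K < ⊤ := hK.measure_lt_top_of_nhdsWithin fun x _ =>
    ⟨_, inter_mem_nhdsWithin K (ball_mem_nhds x (half_pos hr)), hball x⟩
  rw [isFiniteMeasure_iff, ← measure_add_measure_compl hK.measurableSet, hμ, add_zero]
  exact hμK

lemma IsCompact.exists_pos_le_dist_compl {X : Type*} [MetricSpace X] {K U : Set X}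
    (hK : IsCompact K) (hU : IsOpen U) (hKU : K ⊆ U) :
    ∃ δ > 0, ∀ x ∈ K, ∀ z ∉ U, δ ≤ dist x z := by
  obtain ⟨δ, hδ, hsub⟩ := hK.exists_thickening_subset_open hU hKU
  refine ⟨δ, hδ, fun x hx z hz => not_lt.mp fun hlt => hz (hsub ?_)⟩
  exact mem_thickening_iff.mpr ⟨x, hx, by rwa [dist_comm]⟩

section Riesz

variable {n : ℕ} {α : ℝ}

lemma rieszK_eq_inv_rpow (x y : Rn n) :
    rieszK n α x y = (ENNReal.ofReal (dist x y) ^ ((n : ℝ) - α))⁻¹ := by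
  rw [rieszK, ← neg_sub (n : ℝ) α, ENNReal.rpow_neg, dist_eq_norm, ofReal_norm, enorm_eq_nnnorm]

lemma rieszK_le_of_le_dist (hαn : α ≤ n) {x y : Rn n} {r : ℝ} (h : r ≤ dist x y) :
    rieszK n α x y ≤ (ENNReal.ofReal r ^ ((n : ℝ) - α))⁻¹ := by
  rw [rieszK_eq_inv_rpow]
  gcongr

lemma le_rieszK_of_dist_le (hαn : α ≤ n) {x y : Rn n} {r : ℝ} (h : dist x y ≤ r) :
    (ENNReal.ofReal r ^ ((n : ℝ) - α))⁻¹ ≤ rieszK n α x y := by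
  rw [rieszK_eq_inv_rpow]
  gcongr

lemma exists_pos_forall_dist_lt_le_rieszK (hαn : α < n) {M : ℝ≥0∞} (hM : M ≠ ⊤) :
    ∃ r > 0, ∀ x y : Rn n, dist x y < r → M ≤ rieszK n α x y := by
  set m : ℝ := M.toReal + 1
  have hm : 0 < m := by positivity
  have hp : (n : ℝ) - α ≠ 0 := (sub_pos.mpr hαn).ne'
  refine ⟨m ^ (-((n : ℝ) - α)⁻¹), Real.rpow_pos_of_pos hm _, fun x y hxy => ?_⟩
  refine le_trans ?_ (le_rieszK_of_dist_le hαn.le hxy.le)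
  rw [ENNReal.ofReal_rpow_of_pos (Real.rpow_pos_of_pos hm _), ← Real.rpow_mul hm.le,
    neg_mul, inv_mul_cancel₀ hp, Real.rpow_neg_one, ENNReal.ofReal_inv_of_pos hm, inv_inv,
    ← ENNReal.ofReal_toReal hM]
  exact ENNReal.ofReal_le_ofReal (by linarith)

lemma rieszK_le_mul_rieszK (hαn : α ≤ n) {c : ℝ} (hc : 0 < c) {x x₀ z : Rn n}
    (h : dist x₀ z ≤ c * dist x z) :
    rieszK n α x z ≤ ENNReal.ofReal c ^ ((n : ℝ) - α) * rieszK n α x₀ z := by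
  have hp : 0 ≤ (n : ℝ) - α := by linarith
  set k := ENNReal.ofReal c ^ ((n : ℝ) - α)
  have hk0 : k ≠ 0 := (ENNReal.rpow_pos (by simpa using hc) ENNReal.ofReal_ne_top).ne'
  have hkt : k ≠ ⊤ := ENNReal.rpow_ne_top_of_nonneg hp ENNReal.ofReal_ne_top
  have hle : ENNReal.ofReal (dist x₀ z) ^ ((n : ℝ) - α) ≤
      ENNReal.ofReal (dist x z) ^ ((n : ℝ) - α) * k := by
    rw [mul_comm, ← ENNReal.mul_rpow_of_nonneg _ _ hp, ← ENNReal.ofReal_mul hc.le]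
    gcongr
  rw [rieszK_eq_inv_rpow, rieszK_eq_inv_rpow]
  calc (ENNReal.ofReal (dist x z) ^ ((n : ℝ) - α))⁻¹
      ≤ (ENNReal.ofReal (dist x₀ z) ^ ((n : ℝ) - α) / k)⁻¹ :=
        ENNReal.inv_le_inv.mpr (ENNReal.div_le_of_le_mul hle)
    _ = k * (ENNReal.ofReal (dist x₀ z) ^ ((n : ℝ) - α))⁻¹ := by
        rw [ENNReal.inv_div (Or.inl hkt) (Or.inl hk0), div_eq_mul_inv]

lemma exists_rieszK_le_mul_rieszK (hαn : α ≤ n) {K U : Set (Rn n)} (hK : IsCompact K) {δ : ℝ}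
    (hδ : 0 < δ) (hKU : ∀ x ∈ K, ∀ z ∉ U, δ ≤ dist x z) (z₀ : Rn n) :
    ∃ C ≠ ⊤, ∀ x ∈ K, ∀ z ∉ U, rieszK n α x z ≤ C * rieszK n α z₀ z := by
  obtain ⟨R, hR, hKR⟩ := hK.isBounded.subset_closedBall_lt 0 z₀
  have hc : 0 < R / δ + 1 := by positivity
  refine ⟨_, ENNReal.rpow_ne_top_of_nonneg (by linarith) ENNReal.ofReal_ne_top,
    fun x hx z hz => rieszK_le_mul_rieszK hαn hc ?_⟩
  have hxz : R ≤ R / δ * dist x z := by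
    rw [div_mul_eq_mul_div, le_div_iff₀ hδ]
    exact mul_le_mul_of_nonneg_left (hKU x hx z hz) hR.le
  linarith [dist_triangle z₀ x z, dist_comm z₀ x, mem_closedBall.mp (hKR hx)]

lemma exists_pot_balayage_le (hαn : α ≤ n) {D K : Set (Rn n)} (hD : IsOpen D)
    (hDc : Dᶜ.Nonempty) (hK : IsCompact K) (hKD : K ⊆ D) {b : Rn n → Measure (Rn n)}
    (hbsupp : ∀ y ∈ D, b y D = 0)
    (hble : ∀ y ∈ D, ∀ x, pot (rieszK n α) (b y) x ≤ rieszK n α x y) :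
    ∃ M ≠ ⊤, ∀ y ∈ K, ∀ x ∈ K, pot (rieszK n α) (b y) x ≤ M := by
  obtain ⟨δ, hδ, hKD'⟩ := hK.exists_pos_le_dist_compl hD hKD
  obtain ⟨z₀, hz₀⟩ := hDc
  obtain ⟨C, hC, hcomp⟩ := exists_rieszK_le_mul_rieszK hαn hK hδ hKD' z₀
  have hδp : ENNReal.ofReal δ ^ ((n : ℝ) - α) ≠ 0 :=
    (ENNReal.rpow_pos (by simpa using hδ) ENNReal.ofReal_ne_top).ne'
  refine ⟨C * (ENNReal.ofReal δ ^ ((n : ℝ) - α))⁻¹,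
    ENNReal.mul_ne_top hC (ENNReal.inv_ne_top.mpr hδp), fun y hy x hx => ?_⟩
  calc pot (rieszK n α) (b y) x ≤ C * pot (rieszK n α) (b y) z₀ :=
        pot_le_mul_pot (hbsupp y (hKD hy)) hC (hcomp x hx)
    _ ≤ C * rieszK n α z₀ y := by gcongr; exact hble y (hKD hy) z₀
    _ ≤ C * (ENNReal.ofReal δ ^ ((n : ℝ) - α))⁻¹ := by
        gcongr
        exact rieszK_le_of_le_dist hαn (dist_comm y z₀ ▸ hKD' y hy z₀ hz₀)

end Riesz

section Green

variable {n : ℕ} {α : ℝ} {b : Rn n → Measure (Rn n)} {K : Set (Rn n)} {M : ℝ≥0∞}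

lemma greenK_le_rieszK (x y : Rn n) : greenK n α b x y ≤ rieszK n α x y :=
  tsub_le_self

lemma isFiniteMeasure_of_en_greenK_ne_top (hαn : α < n) (hK : IsCompact K) (hM : M ≠ ⊤)
    (hpot : ∀ y ∈ K, ∀ x ∈ K, pot (rieszK n α) (b y) x ≤ M) {μ : Measure (Rn n)}
    (hμ : μ Kᶜ = 0) (hE : en (greenK n α b) μ μ ≠ ⊤) : IsFiniteMeasure μ := by
  obtain ⟨r, hr, hκ⟩ := exists_pos_forall_dist_lt_le_rieszK hαn (ENNReal.add_ne_top.mpr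
    ⟨hM, ENNReal.one_ne_top⟩)
  refine isFiniteMeasure_of_en_ne_top hK hr (fun x hx y hy hxy => ?_) hμ hE
  calc 1 = M + 1 - M := (ENNReal.add_sub_cancel_left hM).symm
    _ ≤ rieszK n α x y - pot (rieszK n α) (b y) x := tsub_le_tsub (hκ x y hxy) (hpot y hy x hx)

lemma en_rieszK_le_en_greenK_add (hpot : ∀ y ∈ K, ∀ x ∈ K, pot (rieszK n α) (b y) x ≤ M)
    {μ ν : Measure (Rn n)} (hμ : μ Kᶜ = 0) (hν : ν Kᶜ = 0) :
    en (rieszK n α) μ ν ≤ en (greenK n α b) μ ν + M * ν univ * μ univ :=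
  en_le_en_add (fun x hx y hy => le_tsub_add.trans (add_le_add_right (hpot y hy x hx) _)) hμ hν

end Green

theorem stmt11_general (n : ℕ) (hn : 3 ≤ n) (α : ℝ) (hα2 : α ≤ 2)
    (D : Set (Rn n)) (hDopen : IsOpen D)
    (hcap : cap (rieszK n α) Dᶜ ≠ 0)
    (b : Rn n → Measure (Rn n))
    (hbsupp : ∀ y ∈ D, (b y) D = 0)
    (hble : ∀ y ∈ D, ∀ x, pot (rieszK n α) (b y) x ≤ rieszK n α x y)
    (μp μn : Measure (Rn n)) (K : Set (Rn n)) (hK : IsCompact K) (hKD : K ⊆ D)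
    (hμpK : μp Kᶜ = 0) (hμnK : μn Kᶜ = 0) :
    (en (greenK n α b) μp μp ≠ ⊤ ∧ en (greenK n α b) μn μn ≠ ⊤ ∧
        en (greenK n α b) μp μn ≠ ⊤) ↔
      (en (rieszK n α) μp μp ≠ ⊤ ∧ en (rieszK n α) μn μn ≠ ⊤ ∧
        en (rieszK n α) μp μn ≠ ⊤) := by
  have hαn : α < n := by
    have : (3 : ℝ) ≤ n := by exact_mod_cast hn
    linarith
  have hDc : Dᶜ.Nonempty := nonempty_iff_ne_empty.mpr fun h => hcap (h ▸ cap_empty _)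
  obtain ⟨M, hM, hpot⟩ := exists_pot_balayage_le hαn.le hDopen hDc hK hKD hbsupp hble
  have hgreen : ∀ μ ν : Measure (Rn n), en (rieszK n α) μ ν ≠ ⊤ → en (greenK n α b) μ ν ≠ ⊤ :=
    fun μ ν h => ne_top_of_le_ne_top h (en_mono_kernel greenK_le_rieszK μ ν)
  have hriesz : ∀ μ ν : Measure (Rn n), μ Kᶜ = 0 → ν Kᶜ = 0 → IsFiniteMeasure μ →
      IsFiniteMeasure ν → en (greenK n α b) μ ν ≠ ⊤ → en (rieszK n α) μ ν ≠ ⊤ :=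
    fun μ ν hμ hν _ _ h => ne_top_of_le_ne_top (by finiteness)
      (en_rieszK_le_en_greenK_add hpot hμ hν)
  constructor
  · rintro ⟨hpp, hnn, hpn⟩
    have hfp := isFiniteMeasure_of_en_greenK_ne_top hαn hK hM hpot hμpK hpp
    have hfn := isFiniteMeasure_of_en_greenK_ne_top hαn hK hM hpot hμnK hnn
    exact ⟨hriesz _ _ hμpK hμpK hfp hfp hpp, hriesz _ _ hμnK hμnK hfn hfn hnn,
      hriesz _ _ hμpK hμnK hfp hfn hpn⟩
  · rintro ⟨hpp, hnn, hpn⟩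
    exact ⟨hgreen _ _ hpp, hgreen _ _ hnn, hgreen _ _ hpn⟩

/-- A signed measure `μ = μp − μn` on a domain `D ⊆ ℝⁿ` with `c_α(Dᶜ) > 0`, having compact
support contained in `D`, has finite α-Green energy iff its extension by zero has finite
α-Riesz energy. Here `b y` is the α-Riesz balayage of the Dirac measure at `y` onto
`Dᶜ`, and `g` is the α-Green kernel defined from `b`. -/
theorem stmt11 (n : ℕ) (hn : 3 ≤ n) (α : ℝ) (hα : 0 < α) (hα2 : α ≤ 2)
    (D : Set (Rn n)) (hDopen : IsOpen D) (hDconn : IsConnected D)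
    (hcap : cap (rieszK n α) Dᶜ ≠ 0)
    (b : Rn n → Measure (Rn n))
    (hbsupp : ∀ y ∈ D, (b y) D = 0)
    (hble : ∀ y ∈ D, ∀ x, pot (rieszK n α) (b y) x ≤ rieszK n α x y)
    (hbqe : ∀ y ∈ D, cap (rieszK n α)
      {x ∈ Dᶜ | pot (rieszK n α) (b y) x ≠ rieszK n α x y} = 0)
    (μp μn : Measure (Rn n)) (K : Set (Rn n)) (hK : IsCompact K) (hKD : K ⊆ D)
    (hμpK : μp Kᶜ = 0) (hμnK : μn Kᶜ = 0) :
    (en (greenK n α b) μp μp ≠ ⊤ ∧ en (greenK n α b) μn μn ≠ ⊤ ∧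
        en (greenK n α b) μp μn ≠ ⊤) ↔
      (en (rieszK n α) μp μp ≠ ⊤ ∧ en (rieszK n α) μn μn ≠ ⊤ ∧
        en (rieszK n α) μp μn ≠ ⊤) :=
  stmt11_general n hn α hα2 D hDopen hcap b hbsupp hble μp μn K hK hKD hμpK hμnK
end

section
/- Let D ⊊ ℝⁿ be a domain (n ≥ 3, 0 < α ≤ 2) with Dᶜ not α-thin at infinity, and suppose the relatively closed set A₁ ⊆ D satisfies c_α(A₁) = ∞. Then there exists a positive Radon measure ξ on ℝⁿ carried by A₁ with finite α-Riesz energy (‖ξ‖_α < ∞) and infinite total mass ξ(A₁) = ∞. (Construction: choose radii r_ℓ ↑ ∞ and measures ξ_ℓ ∈ E⁺_α(A₁ \ B(0, r_ℓ)) of unit mass with ‖ξ_ℓ‖_α ≤ ℓ^{−2} and pairwise 'escaping' compact supports; then ξ := Σ_ℓ ξ_ℓ works.) -/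
open MeasureTheory
open scoped ENNReal

/-!
Since `c_α(A₁) = ∞`, `A₁` carries unit measures of arbitrarily small energy. Such a measure
can put little mass on a fixed ball, because the kernel is bounded below there; so its part
outside the ball and inside a larger one is a piece of mass `≥ 1/4` and tiny energy. Choosing
pieces `ν_k` with energy `≤ 4^{-k}`, each lying at distance `≥ 4^k` from the previous ones,
the decay of the kernel gives `E(ν_i, ν_j) ≤ 2^{-i} 2^{-j}`, so `ξ = Σ ν_k` has energy
`≤ (Σ 2^{-k})² = 4` and infinite mass.
-/

open Metric Set Function

section Energy

variable {X : Type*} [MeasurableSpace X] (κ : X → X → ℝ≥0∞)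

lemma en_mono {μ μ' ν ν' : Measure X} (hμ : μ' ≤ μ) (hν : ν' ≤ ν) :
    en κ μ' ν' ≤ en κ μ ν :=
  lintegral_mono' hμ fun _ ↦ lintegral_mono' hν le_rfl

lemma en_comm (hκ : Measurable (uncurry κ)) (hsymm : ∀ x y, κ x y = κ y x)
    (μ ν : Measure X) [SFinite μ] [SFinite ν] : en κ μ ν = en κ ν μ := by
  rw [en, lintegral_lintegral_swap hκ.aemeasurable, en]
  simp only [hsymm]

lemma en_le_of_forall_le {μ ν : Measure X} {S T : Set X} {c : ℝ≥0∞}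
    (hμ : μ Sᶜ = 0) (hν : ν Tᶜ = 0) (h : ∀ x ∈ S, ∀ y ∈ T, κ x y ≤ c) :
    en κ μ ν ≤ c * ν univ * μ univ :=
  calc en κ μ ν ≤ ∫⁻ _, ∫⁻ _, c ∂ν ∂μ :=
        lintegral_mono_ae <| Filter.Eventually.mono (mem_ae_iff.2 hμ) fun x hx ↦
          lintegral_mono_ae <| Filter.Eventually.mono (mem_ae_iff.2 hν) fun y hy ↦ h x hx y hy
    _ = c * ν univ * μ univ := by simp only [lintegral_const]

lemma mul_measure_mul_le_en {μ : Measure X} {B : Set X} (hB : MeasurableSet B) {c : ℝ≥0∞}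
    (h : ∀ x ∈ B, ∀ y ∈ B, c ≤ κ x y) : c * μ B * μ B ≤ en κ μ μ :=
  calc c * μ B * μ B = ∫⁻ _, ∫⁻ _, c ∂μ.restrict B ∂μ.restrict B := by
        simp only [lintegral_const, Measure.restrict_apply_univ]
    _ ≤ en κ (μ.restrict B) (μ.restrict B) :=
        lintegral_mono_ae <| (ae_restrict_mem hB).mono fun x hx ↦
          lintegral_mono_ae <| (ae_restrict_mem hB).mono fun y hy ↦ h x hx y hy
    _ ≤ en κ μ μ := en_mono κ Measure.restrict_le_self Measure.restrict_le_self

lemma measure_le_half_of_en_lt {μ : Measure X} {B : Set X} (hB : MeasurableSet B)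
    {c : ℝ≥0∞} (h : ∀ x ∈ B, ∀ y ∈ B, c ≤ κ x y) (hen : en κ μ μ < c * 2⁻¹ * 2⁻¹) :
    μ B ≤ 2⁻¹ := by
  by_contra! hμB
  have : c * 2⁻¹ * 2⁻¹ ≤ c * μ B * μ B := by gcongr
  exact (this.trans (mul_measure_mul_le_en κ hB h)).not_gt hen

lemma exists_en_lt_of_cap_eq_top {Q : Set X} (h : cap κ Q = ⊤) {δ : ℝ≥0∞} (hδ : δ ≠ 0) :
    ∃ μ : Measure X, μ Qᶜ = 0 ∧ μ univ = 1 ∧ en κ μ μ < δ := by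
  rw [cap, ENNReal.inv_eq_top] at h
  have := h.trans_lt (pos_iff_ne_zero.2 hδ)
  simp only [iInf_lt_iff] at this
  obtain ⟨μ, hQ, h1, -, hlt⟩ := this
  exact ⟨μ, hQ, h1, hlt⟩

lemma en_sum_sum (hκ : Measurable (uncurry κ)) {ι : Type*} [Countable ι]
    (μ ν : ι → Measure X) [∀ i, SFinite (ν i)] :
    en κ (Measure.sum μ) (Measure.sum ν) = ∑' i, ∑' j, en κ (μ i) (ν j) := by
  simp only [en, lintegral_sum_measure]
  exact tsum_congr fun i ↦ lintegral_tsum fun j ↦ hκ.lintegral_prod_right'.aemeasurable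

lemma en_sum_self_le (hκ : Measurable (uncurry κ)) {ι : Type*} [Countable ι]
    {ν : ι → Measure X} [∀ i, SFinite (ν i)] {a : ι → ℝ≥0∞}
    (h : ∀ i j, en κ (ν i) (ν j) ≤ a i * a j) :
    en κ (Measure.sum ν) (Measure.sum ν) ≤ (∑' i, a i) ^ 2 := by
  rw [en_sum_sum κ hκ, sq, ← ENNReal.tsum_mul_right]
  refine ENNReal.tsum_le_tsum fun i ↦ ?_
  rw [← ENNReal.tsum_mul_left]
  exact ENNReal.tsum_le_tsum (h i)

end Energy

lemma exists_lt_measure_inter_closedBall {X : Type*} [PseudoMetricSpace X] [MeasurableSpace X]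
    (μ : Measure X) {s : Set X} {a : ℝ≥0∞} (h : a < μ s) (x : X) (r : ℝ) :
    ∃ R, r ≤ R ∧ a < μ (s ∩ closedBall x R) := by
  have hmono : Monotone fun j : ℕ ↦ s ∩ closedBall x j := fun i j hij ↦
    inter_subset_inter_right _ (closedBall_subset_closedBall (by exact_mod_cast hij))
  rw [← inter_univ s, ← iUnion_closedBall_nat x, inter_iUnion, hmono.measure_iUnion] at h
  obtain ⟨j, hj⟩ := lt_iSup_iff.1 h
  exact ⟨max j r, le_max_right _ _, hj.trans_le
    (measure_mono (inter_subset_inter_right _ (closedBall_subset_closedBall (le_max_left _ _))))⟩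

section Riesz

variable {n : ℕ} {α : ℝ}

lemma rieszK_comm (x y : Rn n) : rieszK n α x y = rieszK n α y x := by
  simp only [rieszK, ← enorm_eq_nnnorm, enorm_sub_rev]

lemma measurable_uncurry_rieszK : Measurable (uncurry (rieszK n α)) := by
  unfold rieszK
  fun_prop

lemma exists_ne_zero_le_rieszK (hαn : α ≤ n) (R : ℝ) :
    ∃ c ≠ 0, ∀ x ∈ closedBall (0 : Rn n) R, ∀ y ∈ closedBall (0 : Rn n) R, c ≤ rieszK n α x y := by
  refine ⟨(ENNReal.ofReal (2 * R) ^ ((n : ℝ) - α))⁻¹,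
    ENNReal.inv_ne_zero.2 (ENNReal.rpow_ne_top_of_nonneg (by linarith) ENNReal.ofReal_ne_top),
    fun x hx y hy ↦ ?_⟩
  rw [mem_closedBall_zero_iff] at hx hy
  have hxy : (‖x - y‖₊ : ℝ≥0∞) ≤ ENNReal.ofReal (2 * R) := by
    rw [← enorm_eq_nnnorm, ← ofReal_norm]
    exact ENNReal.ofReal_le_ofReal (by linarith [norm_sub_le x y])
  rw [rieszK, show α - n = -(n - α) by ring, ENNReal.rpow_neg]
  gcongr

lemma rieszK_le_inv (hαn : α + 1 ≤ n) {x y : Rn n} {d : ℝ} (hd : 1 ≤ d) (h : d ≤ ‖x - y‖) :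
    rieszK n α x y ≤ (ENNReal.ofReal d)⁻¹ := by
  have hdxy : ENNReal.ofReal d ≤ ‖x - y‖₊ := by
    rw [← enorm_eq_nnnorm, ← ofReal_norm]
    exact ENNReal.ofReal_le_ofReal h
  calc rieszK n α x y ≤ (‖x - y‖₊ : ℝ≥0∞) ^ (-1 : ℝ) :=
        ENNReal.rpow_le_rpow_of_exponent_le
          ((ENNReal.one_le_ofReal.2 hd).trans hdxy) (by linarith)
    _ ≤ (ENNReal.ofReal d)⁻¹ := by
        rw [ENNReal.rpow_neg_one]
        gcongr

lemma en_rieszK_le_of_separated (hαn : α + 1 ≤ n) {μ ν : Measure (Rn n)} {ρ d : ℝ}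
    (hd : 1 ≤ d) (hμ : μ (closedBall 0 ρ)ᶜ = 0) (hν : ν (closedBall 0 (ρ + d)) = 0) :
    en (rieszK n α) μ ν ≤ (ENNReal.ofReal d)⁻¹ * ν univ * μ univ := by
  refine en_le_of_forall_le _ hμ (by rwa [compl_compl]) fun x hx y hy ↦ rieszK_le_inv hαn hd ?_
  rw [mem_closedBall_zero_iff] at hx
  rw [mem_compl_iff, mem_closedBall_zero_iff, not_le] at hy
  linarith [norm_sub_norm_le y x, norm_sub_rev x y]

lemma exists_annular_piece (hαn : α ≤ n) {A : Set (Rn n)} (hA : cap (rieszK n α) A = ⊤) (r : ℝ)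
    {δ : ℝ≥0∞} (hδ : δ ≠ 0) :
    ∃ (ν : Measure (Rn n)) (R : ℝ), r ≤ R ∧ ν Aᶜ = 0 ∧ ν (closedBall 0 r) = 0 ∧
      ν (closedBall 0 R)ᶜ = 0 ∧ 4⁻¹ ≤ ν univ ∧ ν univ ≤ 1 ∧ en (rieszK n α) ν ν < δ := by
  set B := closedBall (0 : Rn n) r
  obtain ⟨c, hc0, hc⟩ := exists_ne_zero_le_rieszK hαn r
  obtain ⟨μ, hμA, hμ1, hμen⟩ := exists_en_lt_of_cap_eq_top _ hA
    (δ := min δ (c * 2⁻¹ * 2⁻¹)) (by simp [hδ, hc0])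
  have hB : μ B ≤ 2⁻¹ :=
    measure_le_half_of_en_lt _ measurableSet_closedBall hc (hμen.trans_le (min_le_right _ _))
  have hBc : 2⁻¹ ≤ μ Bᶜ := by
    rw [← ENNReal.one_sub_inv_two, tsub_le_iff_left, ← hμ1]
    exact (measure_univ_le_add_compl B).trans (add_le_add_left hB _)
  obtain ⟨R, hrR, hR⟩ := exists_lt_measure_inter_closedBall μ
    ((by norm_num : (4⁻¹ : ℝ≥0∞) < 2⁻¹).trans_le hBc) 0 r
  have hS : MeasurableSet (Bᶜ ∩ closedBall 0 R) :=
    measurableSet_closedBall.compl.inter measurableSet_closedBall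
  refine ⟨μ.restrict (Bᶜ ∩ closedBall 0 R), R, hrR, ?_, ?_, ?_, ?_, ?_, ?_⟩
  · rw [Measure.restrict_apply' hS]
    exact measure_mono_null inter_subset_left hμA
  · rw [Measure.restrict_apply' hS, ← inter_assoc, inter_compl_self, empty_inter, measure_empty]
  · rw [Measure.restrict_apply' hS, inter_comm, inter_assoc, inter_compl_self, inter_empty,
      measure_empty]
  · rw [Measure.restrict_apply_univ]
    exact hR.le
  · rw [Measure.restrict_apply_univ, ← hμ1]
    exact measure_mono (subset_univ _)
  · exact (en_mono _ Measure.restrict_le_self Measure.restrict_le_self).trans_lt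
      (hμen.trans_le (min_le_left _ _))

lemma exists_escaping_seq (hαn : α ≤ n) {A : Set (Rn n)} (hA : cap (rieszK n α) A = ⊤) :
    ∃ (ν : ℕ → Measure (Rn n)) (R : ℕ → ℝ), Monotone R ∧ ∀ k, ν k Aᶜ = 0 ∧
      ν k (closedBall 0 (R k))ᶜ = 0 ∧ ν (k + 1) (closedBall 0 (R k + 4 ^ (k + 1))) = 0 ∧
      4⁻¹ ≤ ν k univ ∧ ν k univ ≤ 1 ∧ en (rieszK n α) (ν k) (ν k) ≤ 2⁻¹ ^ k * 2⁻¹ ^ k := by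
  choose ν R hrR hνA hin hout hlow hup hen using fun (r : ℝ) (k : ℕ) ↦
    exists_annular_piece hαn hA r (δ := 2⁻¹ ^ k * 2⁻¹ ^ k) (by simp)
  -- `r k` is the radius of the ball the `k`-th piece avoids
  let r : ℕ → ℝ := fun k ↦ Nat.rec 0 (fun k rk ↦ R rk k + 4 ^ (k + 1)) k
  have hr (k : ℕ) : r (k + 1) = R (r k) k + 4 ^ (k + 1) := rfl
  refine ⟨fun k ↦ ν (r k) k, fun k ↦ R (r k) k, monotone_nat_of_le_succ fun k ↦ ?_,
    fun k ↦ ⟨hνA _ _, hout _ _, hin _ _, hlow _ _, hup _ _, (hen _ _).le⟩⟩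
  calc R (r k) k ≤ r (k + 1) := by
        rw [hr]
        linarith [pow_pos (by norm_num : (0 : ℝ) < 4) (k + 1)]
    _ ≤ R (r (k + 1)) (k + 1) := hrR _ _

lemma en_le_geometric_of_escaping (hαn : α + 1 ≤ n) {ν : ℕ → Measure (Rn n)} {R : ℕ → ℝ}
    (hR : Monotone R)
    (hsupp : ∀ k, ν k (closedBall 0 (R k))ᶜ = 0)
    (hgap : ∀ k, ν (k + 1) (closedBall 0 (R k + 4 ^ (k + 1))) = 0)
    (hmass : ∀ k, ν k univ ≤ 1) (hen : ∀ k, en (rieszK n α) (ν k) (ν k) ≤ 2⁻¹ ^ k * 2⁻¹ ^ k)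
    (i j : ℕ) : en (rieszK n α) (ν i) (ν j) ≤ 2⁻¹ ^ i * 2⁻¹ ^ j := by
  have hlater (i m : ℕ) (him : i ≤ m) :
      en (rieszK n α) (ν i) (ν (m + 1)) ≤ 2⁻¹ ^ i * 2⁻¹ ^ (m + 1) := by
    have hsupp' : ν i (closedBall 0 (R m))ᶜ = 0 := measure_mono_null
      (compl_subset_compl.2 (closedBall_subset_closedBall (hR him))) (hsupp i)
    calc en (rieszK n α) (ν i) (ν (m + 1))
        ≤ (ENNReal.ofReal (4 ^ (m + 1)))⁻¹ * ν (m + 1) univ * ν i univ :=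
          en_rieszK_le_of_separated hαn (one_le_pow₀ (by norm_num)) hsupp' (hgap m)
      _ ≤ (ENNReal.ofReal (4 ^ (m + 1)))⁻¹ * 1 * 1 := by gcongr <;> apply hmass
      _ = 2⁻¹ ^ (m + 1) * 2⁻¹ ^ (m + 1) := by
          rw [mul_one, mul_one, ENNReal.ofReal_pow (by norm_num), ← mul_pow,
            ← ENNReal.mul_inv (by simp) (by simp), ENNReal.inv_pow]
          norm_num
      _ ≤ 2⁻¹ ^ i * 2⁻¹ ^ (m + 1) :=
          mul_le_mul_of_nonneg_right (pow_le_pow_right_of_le_one' (by norm_num) (by omega))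
            zero_le
  have : ∀ k, IsFiniteMeasure (ν k) := fun k ↦ ⟨(hmass k).trans_lt ENNReal.one_lt_top⟩
  rcases lt_trichotomy i j with hij | rfl | hij
  · obtain ⟨m, rfl⟩ : ∃ m, j = m + 1 := ⟨j - 1, by omega⟩
    exact hlater i m (by omega)
  · exact hen i
  · obtain ⟨m, rfl⟩ : ∃ m, i = m + 1 := ⟨i - 1, by omega⟩
    rw [en_comm _ measurable_uncurry_rieszK rieszK_comm, mul_comm]
    exact hlater j m (by omega)

end Riesz

theorem stmt16_general (n : ℕ) (hn : 3 ≤ n) (α : ℝ) (hα2 : α ≤ 2)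
    (A₁ : Set (Rn n))
    (hcapA : cap (rieszK n α) A₁ = ⊤) :
    ∃ ξ : Measure (Rn n), ξ A₁ᶜ = 0 ∧ en (rieszK n α) ξ ξ ≠ ⊤ ∧ ξ A₁ = ⊤ := by
  have hαn : α + 1 ≤ n := by
    have : (3 : ℝ) ≤ n := by exact_mod_cast hn
    linarith
  obtain ⟨ν, R, hR, hν⟩ := exists_escaping_seq (by linarith) hcapA
  choose hνA hsupp hgap hlow hup hen using hν
  have : ∀ k, IsFiniteMeasure (ν k) := fun k ↦ ⟨(hup k).trans_lt ENNReal.one_lt_top⟩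
  have hnull : Measure.sum ν A₁ᶜ = 0 := by simp [Measure.sum_apply_of_countable, hνA]
  refine ⟨Measure.sum ν, hnull, ne_top_of_le_ne_top ?_ (en_sum_self_le _
    measurable_uncurry_rieszK (en_le_geometric_of_escaping hαn hR hsupp hgap hup hen)), ?_⟩
  · rw [ENNReal.tsum_geometric, ENNReal.one_sub_inv_two, inv_inv]
    norm_num
  · rw [measure_congr (ae_eq_univ.2 hnull), Measure.sum_apply_of_countable, ← top_le_iff,
      ← ENNReal.tsum_const_eq_top_of_ne_zero (α := ℕ) (by norm_num : (4⁻¹ : ℝ≥0∞) ≠ 0)]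
    exact ENNReal.tsum_le_tsum hlow

/-- If `D ⊊ ℝⁿ` is a domain (`n ≥ 3`, `0 < α ≤ 2`) whose complement is not α-thin at
infinity (balayage onto `Dᶜ` preserves total mass of bounded measures), and `A₁ ⊆ D` is
relatively closed in `D` with `c_α(A₁) = ∞`, then there exists a positive Radon measure
`ξ` carried by `A₁` with finite α-Riesz energy and infinite total mass. -/
theorem stmt16 (n : ℕ) (hn : 3 ≤ n) (α : ℝ) (hα : 0 < α) (hα2 : α ≤ 2)
    (D : Set (Rn n)) (hDopen : IsOpen D) (hDconn : IsConnected D)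
    (hDne : D ≠ Set.univ)
    (b : Rn n → Measure (Rn n))
    (hbsupp : ∀ y ∈ D, (b y) D = 0)
    (hble : ∀ y ∈ D, ∀ x, pot (rieszK n α) (b y) x ≤ rieszK n α x y)
    (hbqe : ∀ y ∈ D, cap (rieszK n α)
      {x ∈ Dᶜ | pot (rieszK n α) (b y) x ≠ rieszK n α x y} = 0)
    -- `Dᶜ` is not α-thin at infinity: balayage preserves total mass of bounded measures
    (hthin : ∀ μ : Measure (Rn n), μ Dᶜ = 0 → IsFiniteMeasure μ →
      (μ.bind b) Set.univ = μ Set.univ)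
    (A₁ : Set (Rn n)) (hA₁ : ∃ F : Set (Rn n), IsClosed F ∧ A₁ = F ∩ D)
    (hcapA : cap (rieszK n α) A₁ = ⊤) :
    ∃ ξ : Measure (Rn n), ξ A₁ᶜ = 0 ∧ en (rieszK n α) ξ ξ ≠ ⊤ ∧ ξ A₁ = ⊤ :=
  stmt16_general n hn α hα2 A₁ hcapA
end
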